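/- Let d ≥ 1, T > 0, ε > 0, γ > 1, and η ≥ 0. Let ρ, θ : (0,T) × ℝ^d → ℝ be positive C¹ functions and u : (0,T) × ℝ^d → ℝ^d a C¹ vector field, with p = (ρθ)^γ of class C², satisfying pointwise on (0,T) × ℝ^d the mass equation ∂_t ρ + div(ρu) = 0, the momentum equations ∂_t(ρ u_i) + div(ρ u_i u) + ε^{−2} ∂_{x_i} p = 0 for each i, and the shifted total potential temperature equation ∂_t(ρθ) + div(ρθ (u − δu)) = 0 with velocity shift δu := η ∇p. Then the total energy satisfies the dissipation identity: ∂_t(ε^{−2} Π_γ(ρθ) + ½ ρ |u|²) + div(½ ρ |u|² u + ε^{−2}(ψ_γ(ρθ) − ψ_γ′(1) ρθ + p)(u − δu)) = − ε^{−2} η |∇p|² ≤ 0. -/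

import Mathlib

/-!
Write `m = ρθ` and `w = u - η ∇p`. Renormalising along the mass equation, the balance of the
kinetic energy `½ρ|u|²` is `∑ᵢ uᵢ · (momentum balance)ᵢ - ½|u|² · (mass balance)`, which the
momentum equation turns into `-ε⁻² u·∇p`. The relative energy `Π_γ` and the relative pressure
`p - 1` satisfy the Gibbs relation `Π_γ(m) + (p - 1) = m Π_γ'(m)`, and since `ψ_γ'(1) - ψ_γ(1) = 1`
the flux in the statement is the enthalpy flux `(Π_γ(m) + p - 1) w`. Its balance is therefore
`Π_γ'(m) · (transport balance of m) + w·∇p = u·∇p - η|∇p|²`, and the pressure work cancels.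
-/

open Set MeasureTheory

/-- Time partial derivative `∂ₜ f` of a function of `(t, x) ∈ ℝ × ℝ^d`. -/
noncomputable def pderivT {d : ℕ} (f : ℝ × (Fin d → ℝ) → ℝ) (z : ℝ × (Fin d → ℝ)) : ℝ :=
  fderiv ℝ f z (1, 0)

/-- Spatial partial derivative `∂_{x i} f` of a function of `(t, x) ∈ ℝ × ℝ^d`. -/
noncomputable def pderivX {d : ℕ} (i : Fin d) (f : ℝ × (Fin d → ℝ) → ℝ)
    (z : ℝ × (Fin d → ℝ)) : ℝ :=
  fderiv ℝ f z (0, Pi.single i 1)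

/-- Spatial divergence of a (time-dependent) vector field on `ℝ^d`. -/
noncomputable def diverg {d : ℕ} (w : ℝ × (Fin d → ℝ) → Fin d → ℝ)
    (z : ℝ × (Fin d → ℝ)) : ℝ :=
  ∑ i, pderivX i (fun y => w y i) z

/-- The Helmholtz function `ψ_γ(z) = z^γ / (γ - 1)`. -/
noncomputable def psiH (γ : ℝ) (z : ℝ) : ℝ := z ^ γ / (γ - 1)

/-- The derivative `ψ_γ'(z) = γ z^(γ-1) / (γ - 1)` of the Helmholtz function. -/
noncomputable def psiH' (γ : ℝ) (z : ℝ) : ℝ := γ * z ^ (γ - 1) / (γ - 1)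

/-- The relative internal energy `Π_γ(z) = ψ_γ(z) - ψ_γ(1) - ψ_γ'(1) (z - 1)`. -/
noncomputable def PiH (γ : ℝ) (z : ℝ) : ℝ := psiH γ z - psiH γ 1 - psiH' γ 1 * (z - 1)

section Helmholtz

variable {γ s : ℝ}

theorem hasDerivAt_psiH (hs : s ≠ 0) : HasDerivAt (psiH γ) (psiH' γ s) s :=
  (Real.hasDerivAt_rpow_const (Or.inl hs)).div_const (γ - 1)

theorem hasDerivAt_PiH (hs : s ≠ 0) : HasDerivAt (PiH γ) (psiH' γ s - psiH' γ 1) s := by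
  have h := ((hasDerivAt_psiH (γ := γ) hs).sub_const (psiH γ 1)).sub
    (((hasDerivAt_id' s).sub_const 1).const_mul (psiH' γ 1))
  rwa [mul_one] at h

theorem mul_psiH'_sub_psiH (hγ : γ ≠ 1) (hs : s ≠ 0) : s * psiH' γ s - psiH γ s = s ^ γ := by
  have hγ' : γ - 1 ≠ 0 := sub_ne_zero.mpr hγ
  rw [psiH, psiH', Real.rpow_sub_one hs]
  field_simp

theorem PiH_add_rpow_sub_one (hγ : γ ≠ 1) (hs : s ≠ 0) :
    PiH γ s + (s ^ γ - 1) = s * (psiH' γ s - psiH' γ 1) := by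
  have h1 := mul_psiH'_sub_psiH hγ one_ne_zero
  rw [Real.one_rpow, one_mul] at h1
  rw [PiH, ← mul_psiH'_sub_psiH hγ hs]
  linear_combination h1

theorem psiH_sub_add_rpow (hγ : γ ≠ 1) :
    psiH γ s - psiH' γ 1 * s + s ^ γ = PiH γ s + (s ^ γ - 1) := by
  have h1 := mul_psiH'_sub_psiH hγ one_ne_zero
  rw [Real.one_rpow, one_mul] at h1
  rw [PiH]
  linear_combination -h1

end Helmholtz

section ConservationLaws

variable {d : ℕ} {z : ℝ × (Fin d → ℝ)}

noncomputable def balance (a : ℝ × (Fin d → ℝ) → ℝ) (b : ℝ × (Fin d → ℝ) → Fin d → ℝ)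
    (z : ℝ × (Fin d → ℝ)) : ℝ :=
  pderivT a z + diverg b z

noncomputable def materialDeriv (q : ℝ × (Fin d → ℝ) → ℝ) (w : ℝ × (Fin d → ℝ) → Fin d → ℝ)
    (z : ℝ × (Fin d → ℝ)) : ℝ :=
  pderivT q z + ∑ j, w z j * pderivX j q z

theorem ContDiffAt.differentiableAt_pderivX {f : ℝ × (Fin d → ℝ) → ℝ} (hf : ContDiffAt ℝ 2 f z)
    (i : Fin d) : DifferentiableAt ℝ (fun y => pderivX i f y) z :=
  ((hf.fderiv_right (m := 1) (by norm_num)).differentiableAt one_ne_zero).clm_apply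
    (differentiableAt_const _)

theorem pderivT_add {f g : ℝ × (Fin d → ℝ) → ℝ} (hf : DifferentiableAt ℝ f z)
    (hg : DifferentiableAt ℝ g z) :
    pderivT (fun y => f y + g y) z = pderivT f z + pderivT g z := by
  rw [pderivT, fderiv_fun_add hf hg, add_apply]; rfl

theorem diverg_add {v w : ℝ × (Fin d → ℝ) → Fin d → ℝ}
    (hv : ∀ j, DifferentiableAt ℝ (fun y => v y j) z)
    (hw : ∀ j, DifferentiableAt ℝ (fun y => w y j) z) :
    diverg (fun y j => v y j + w y j) z = diverg v z + diverg w z := by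
  simp only [diverg, pderivX, fderiv_fun_add (hv _) (hw _), add_apply, Finset.sum_add_distrib]

theorem balance_mul {a q : ℝ × (Fin d → ℝ) → ℝ} {w : ℝ × (Fin d → ℝ) → Fin d → ℝ}
    (ha : DifferentiableAt ℝ a z) (hq : DifferentiableAt ℝ q z)
    (hw : ∀ j, DifferentiableAt ℝ (fun y => w y j) z) :
    balance (fun y => a y * q y) (fun y j => a y * q y * w y j) z
      = q z * balance a (fun y j => a y * w y j) z + a z * materialDeriv q w z := by
  simp only [balance, materialDeriv, diverg, pderivT, pderivX, mul_right_comm (a _) (q _)]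
  simp (disch := first | apply hw | fun_prop) only [fderiv_fun_mul, add_apply, smul_apply,
    smul_eq_mul]
  simp only [mul_add, Finset.mul_sum, Finset.sum_add_distrib]
  ring_nf

theorem materialDeriv_half_sum_sq {u w : ℝ × (Fin d → ℝ) → Fin d → ℝ}
    (hu : ∀ i, DifferentiableAt ℝ (fun y => u y i) z) :
    materialDeriv (fun y => 1 / 2 * ∑ i, u y i ^ 2) w z
      = ∑ i, u z i * materialDeriv (fun y => u y i) w z := by
  simp (disch := first | apply hu | fun_prop) only [materialDeriv, pderivT, pderivX,
    fderiv_const_mul, fderiv_fun_sum, fderiv_fun_pow, smul_apply, smul_eq_mul, sum_apply]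
  simp only [mul_add, Finset.mul_sum, Finset.sum_add_distrib, nsmul_eq_mul]
  congr 1
  · exact Finset.sum_congr rfl fun i _ => by ring
  · rw [Finset.sum_comm]
    exact Finset.sum_congr rfl fun i _ => Finset.sum_congr rfl fun j _ => by ring

theorem balance_kineticEnergy {ρ : ℝ × (Fin d → ℝ) → ℝ} {u : ℝ × (Fin d → ℝ) → Fin d → ℝ}
    (hρ : DifferentiableAt ℝ ρ z) (hu : ∀ i, DifferentiableAt ℝ (fun y => u y i) z) :
    balance (fun y => 1 / 2 * ρ y * ∑ i, u y i ^ 2)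
        (fun y j => 1 / 2 * ρ y * (∑ i, u y i ^ 2) * u y j) z
      = ∑ i, u z i * balance (fun y => ρ y * u y i) (fun y j => ρ y * u y i * u y j) z
        - 1 / 2 * (∑ i, u z i ^ 2) * balance ρ (fun y j => ρ y * u y j) z := by
  have hK : DifferentiableAt ℝ (fun y => 1 / 2 * ∑ i, u y i ^ 2) z := by fun_prop
  have hdensity : (fun y => 1 / 2 * ρ y * ∑ i, u y i ^ 2)
      = fun y => ρ y * (1 / 2 * ∑ i, u y i ^ 2) := by
    funext y; ring
  have hflux : (fun y j => 1 / 2 * ρ y * (∑ i, u y i ^ 2) * u y j)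
      = fun y j => ρ y * (1 / 2 * ∑ i, u y i ^ 2) * u y j := by
    funext y j; ring
  rw [hdensity, hflux, balance_mul hρ hK hu, materialDeriv_half_sum_sq hu]
  have hmomentum : ∑ i, u z i * balance (fun y => ρ y * u y i) (fun y j => ρ y * u y i * u y j) z
      = (∑ i, u z i ^ 2) * balance ρ (fun y j => ρ y * u y j) z
        + ρ z * ∑ i, u z i * materialDeriv (fun y => u y i) u z := by
    simp only [balance_mul hρ (hu _) hu, Finset.sum_mul, Finset.mul_sum, ← Finset.sum_add_distrib]
    exact Finset.sum_congr rfl fun i _ => by ring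
  rw [hmomentum]
  ring

theorem balance_kineticEnergy_of_momentum {ρ : ℝ × (Fin d → ℝ) → ℝ}
    {u : ℝ × (Fin d → ℝ) → Fin d → ℝ} {g : Fin d → ℝ}
    (hρ : DifferentiableAt ℝ ρ z) (hu : ∀ i, DifferentiableAt ℝ (fun y => u y i) z)
    (hmass : balance ρ (fun y j => ρ y * u y j) z = 0)
    (hmom : ∀ i, balance (fun y => ρ y * u y i) (fun y j => ρ y * u y i * u y j) z + g i = 0) :
    balance (fun y => 1 / 2 * ρ y * ∑ i, u y i ^ 2)
        (fun y j => 1 / 2 * ρ y * (∑ i, u y i ^ 2) * u y j) z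
      = -∑ i, u z i * g i := by
  rw [balance_kineticEnergy hρ hu, hmass, mul_zero, sub_zero, ← Finset.sum_neg_distrib]
  exact Finset.sum_congr rfl fun i _ => by linear_combination u z i * hmom i

theorem balance_comp_of_enthalpy {m P : ℝ × (Fin d → ℝ) → ℝ} {w : ℝ × (Fin d → ℝ) → Fin d → ℝ}
    {E : ℝ → ℝ} {E' : ℝ} (hE : HasDerivAt E E' (m z)) (hm : DifferentiableAt ℝ m z)
    (hP : DifferentiableAt ℝ P z) (hw : ∀ j, DifferentiableAt ℝ (fun y => w y j) z)
    (henthalpy : E (m z) + P z = m z * E') :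
    balance (fun y => E (m y)) (fun y j => (E (m y) + P y) * w y j) z
      = E' * balance m (fun y j => m y * w y j) z + ∑ j, w z j * pderivX j P z := by
  have hEm : HasFDerivAt (fun y => E (m y)) (E' • fderiv ℝ m z) z :=
    hE.comp_hasFDerivAt z hm.hasFDerivAt
  have hEm' := hEm.differentiableAt
  have hH : DifferentiableAt ℝ (fun y => E (m y) + P y) z := hEm'.add hP
  simp (disch := first | apply hw | assumption) only [balance, diverg, pderivT, pderivX,
    hEm.fderiv, fderiv_fun_mul, fderiv_fun_add, add_apply, smul_apply, smul_eq_mul, henthalpy]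
  simp only [mul_add, Finset.mul_sum, Finset.sum_add_distrib]
  ring_nf

theorem balance_internalEnergy {γ : ℝ} (hγ : γ ≠ 1) {m : ℝ × (Fin d → ℝ) → ℝ}
    {w : ℝ × (Fin d → ℝ) → Fin d → ℝ} (hm : DifferentiableAt ℝ m z) (hm₀ : m z ≠ 0)
    (hw : ∀ j, DifferentiableAt ℝ (fun y => w y j) z) (c : ℝ) :
    balance (fun y => c * PiH γ (m y)) (fun y j => c * (PiH γ (m y) + (m y ^ γ - 1)) * w y j) z
      = c * (psiH' γ (m z) - psiH' γ 1) * balance m (fun y j => m y * w y j) z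
        + c * ∑ j, w z j * pderivX j (fun y => m y ^ γ) z := by
  have hp := hm.rpow_const (p := γ) (Or.inl hm₀)
  have hflux : (fun y j => c * (PiH γ (m y) + (m y ^ γ - 1)) * w y j)
      = fun y j => (c * PiH γ (m y) + c * (m y ^ γ - 1)) * w y j := by
    funext y j; ring
  rw [hflux, balance_comp_of_enthalpy ((hasDerivAt_PiH hm₀).const_mul c) hm
    ((hp.sub_const 1).const_mul c) hw (by rw [← mul_add, PiH_add_rpow_sub_one hγ hm₀]; ring)]
  simp only [pderivX, fderiv_const_mul (hp.sub_const 1), fderiv_sub_const, smul_apply,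
    smul_eq_mul, Finset.mul_sum]
  exact congrArg _ (Finset.sum_congr rfl fun j _ => by ring)

end ConservationLaws

theorem total_energy_dissipation_identity_general
    (d : ℕ) (T ε γ η : ℝ) (hγ : 1 < γ) (hη : 0 ≤ η)
    (ρ θ : ℝ × (Fin d → ℝ) → ℝ) (u : ℝ × (Fin d → ℝ) → Fin d → ℝ)
    (hρ : ContDiffOn ℝ 1 ρ (Ioo (0:ℝ) T ×ˢ (univ : Set (Fin d → ℝ))))
    (hθ : ContDiffOn ℝ 1 θ (Ioo (0:ℝ) T ×ˢ (univ : Set (Fin d → ℝ))))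
    (hu : ContDiffOn ℝ 1 u (Ioo (0:ℝ) T ×ˢ (univ : Set (Fin d → ℝ))))
    (hp : ContDiffOn ℝ 2 (fun y => (ρ y * θ y) ^ γ) (Ioo (0:ℝ) T ×ˢ (univ : Set (Fin d → ℝ))))
    (hρpos : ∀ z ∈ Ioo (0:ℝ) T ×ˢ (univ : Set (Fin d → ℝ)), 0 < ρ z)
    (hθpos : ∀ z ∈ Ioo (0:ℝ) T ×ˢ (univ : Set (Fin d → ℝ)), 0 < θ z)
    (hmass : ∀ z ∈ Ioo (0:ℝ) T ×ˢ (univ : Set (Fin d → ℝ)),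
      pderivT ρ z + diverg (fun y i => ρ y * u y i) z = 0)
    (hmom : ∀ z ∈ Ioo (0:ℝ) T ×ˢ (univ : Set (Fin d → ℝ)), ∀ i : Fin d,
      pderivT (fun y => ρ y * u y i) z + diverg (fun y j => ρ y * u y i * u y j) z
        + (ε ^ 2)⁻¹ * pderivX i (fun y => (ρ y * θ y) ^ γ) z = 0)
    (htemp : ∀ z ∈ Ioo (0:ℝ) T ×ˢ (univ : Set (Fin d → ℝ)),
      pderivT (fun y => ρ y * θ y) z
        + diverg (fun y i => ρ y * θ y
            * (u y i - η * pderivX i (fun y' => (ρ y' * θ y') ^ γ) y)) z = 0) :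
    ∀ z ∈ Ioo (0:ℝ) T ×ˢ (univ : Set (Fin d → ℝ)),
      pderivT (fun y => (ε ^ 2)⁻¹ * PiH γ (ρ y * θ y)
            + (1 / 2) * ρ y * ∑ i, (u y i) ^ 2) z
        + diverg (fun y j => (1 / 2) * ρ y * (∑ i, (u y i) ^ 2) * u y j
            + (ε ^ 2)⁻¹ * (psiH γ (ρ y * θ y) - psiH' γ 1 * (ρ y * θ y) + (ρ y * θ y) ^ γ)
              * (u y j - η * pderivX j (fun y' => (ρ y' * θ y') ^ γ) y)) z
        = -((ε ^ 2)⁻¹ * η * ∑ i, (pderivX i (fun y => (ρ y * θ y) ^ γ) z) ^ 2)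
      ∧ -((ε ^ 2)⁻¹ * η * ∑ i, (pderivX i (fun y => (ρ y * θ y) ^ γ) z) ^ 2) ≤ 0 := by
  intro z hz
  have hz' : Ioo (0:ℝ) T ×ˢ (univ : Set (Fin d → ℝ)) ∈ nhds z :=
    (isOpen_Ioo.prod isOpen_univ).mem_nhds hz
  have hρz := (hρ.differentiableOn one_ne_zero).differentiableAt hz'
  have hθz := (hθ.differentiableOn one_ne_zero).differentiableAt hz'
  have huz := differentiableAt_pi.1 ((hu.differentiableOn one_ne_zero).differentiableAt hz')
  have hwz : ∀ j, DifferentiableAt ℝ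
      (fun y => u y j - η * pderivX j (fun y' => (ρ y' * θ y') ^ γ) y) z := fun j =>
    (huz j).sub (((hp.contDiffAt hz').differentiableAt_pderivX j).const_mul η)
  have hm : ρ z * θ z ≠ 0 := (mul_pos (hρpos z hz) (hθpos z hz)).ne'
  have hPiH := (hasDerivAt_PiH (γ := γ) hm).differentiableAt
  have hinternal := balance_internalEnergy hγ.ne' (hρz.fun_mul hθz) hm hwz (ε ^ 2)⁻¹
  have hkinetic := balance_kineticEnergy_of_momentum hρz huz (hmass z hz) (hmom z hz)
  have hpressure : (ε ^ 2)⁻¹ * ∑ j, (u z j - η * pderivX j (fun y => (ρ y * θ y) ^ γ) z)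
        * pderivX j (fun y => (ρ y * θ y) ^ γ) z
      = ∑ i, u z i * ((ε ^ 2)⁻¹ * pderivX i (fun y => (ρ y * θ y) ^ γ) z)
        - (ε ^ 2)⁻¹ * η * ∑ i, pderivX i (fun y => (ρ y * θ y) ^ γ) z ^ 2 := by
    simp only [Finset.mul_sum, ← Finset.sum_sub_distrib]
    exact Finset.sum_congr rfl fun j _ => by ring
  have hdissipation : 0 ≤ (ε ^ 2)⁻¹ * η * ∑ i, pderivX i (fun y => (ρ y * θ y) ^ γ) z ^ 2 := by
    positivity
  refine ⟨?_, by linarith⟩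
  simp_rw [psiH_sub_add_rpow hγ.ne']
  rw [pderivT_add (by fun_prop) (by fun_prop), diverg_add (by fun_prop) (fun j => by fun_prop)]
  unfold balance at hinternal hkinetic
  linear_combination hinternal + hkinetic + hpressure
    + (ε ^ 2)⁻¹ * (psiH' γ (ρ z * θ z) - psiH' γ 1) * htemp z hz

theorem total_energy_dissipation_identity
    (d : ℕ) (hd : 1 ≤ d) (T ε γ η : ℝ) (hT : 0 < T) (hε : 0 < ε) (hγ : 1 < γ) (hη : 0 ≤ η)
    (ρ θ : ℝ × (Fin d → ℝ) → ℝ) (u : ℝ × (Fin d → ℝ) → Fin d → ℝ)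
    (hρ : ContDiffOn ℝ 1 ρ (Ioo (0:ℝ) T ×ˢ (univ : Set (Fin d → ℝ))))
    (hθ : ContDiffOn ℝ 1 θ (Ioo (0:ℝ) T ×ˢ (univ : Set (Fin d → ℝ))))
    (hu : ContDiffOn ℝ 1 u (Ioo (0:ℝ) T ×ˢ (univ : Set (Fin d → ℝ))))
    (hp : ContDiffOn ℝ 2 (fun y => (ρ y * θ y) ^ γ) (Ioo (0:ℝ) T ×ˢ (univ : Set (Fin d → ℝ))))
    (hρpos : ∀ z ∈ Ioo (0:ℝ) T ×ˢ (univ : Set (Fin d → ℝ)), 0 < ρ z)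
    (hθpos : ∀ z ∈ Ioo (0:ℝ) T ×ˢ (univ : Set (Fin d → ℝ)), 0 < θ z)
    (hmass : ∀ z ∈ Ioo (0:ℝ) T ×ˢ (univ : Set (Fin d → ℝ)),
      pderivT ρ z + diverg (fun y i => ρ y * u y i) z = 0)
    (hmom : ∀ z ∈ Ioo (0:ℝ) T ×ˢ (univ : Set (Fin d → ℝ)), ∀ i : Fin d,
      pderivT (fun y => ρ y * u y i) z + diverg (fun y j => ρ y * u y i * u y j) z
        + (ε ^ 2)⁻¹ * pderivX i (fun y => (ρ y * θ y) ^ γ) z = 0)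
    (htemp : ∀ z ∈ Ioo (0:ℝ) T ×ˢ (univ : Set (Fin d → ℝ)),
      pderivT (fun y => ρ y * θ y) z
        + diverg (fun y i => ρ y * θ y
            * (u y i - η * pderivX i (fun y' => (ρ y' * θ y') ^ γ) y)) z = 0) :
    ∀ z ∈ Ioo (0:ℝ) T ×ˢ (univ : Set (Fin d → ℝ)),
      pderivT (fun y => (ε ^ 2)⁻¹ * PiH γ (ρ y * θ y)
            + (1 / 2) * ρ y * ∑ i, (u y i) ^ 2) z
        + diverg (fun y j => (1 / 2) * ρ y * (∑ i, (u y i) ^ 2) * u y j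
            + (ε ^ 2)⁻¹ * (psiH γ (ρ y * θ y) - psiH' γ 1 * (ρ y * θ y) + (ρ y * θ y) ^ γ)
              * (u y j - η * pderivX j (fun y' => (ρ y' * θ y') ^ γ) y)) z
        = -((ε ^ 2)⁻¹ * η * ∑ i, (pderivX i (fun y => (ρ y * θ y) ^ γ) z) ^ 2)
      ∧ -((ε ^ 2)⁻¹ * η * ∑ i, (pderivX i (fun y => (ρ y * θ y) ^ γ) z) ^ 2) ≤ 0 :=
  total_energy_dissipation_identity_general d T ε γ η hγ hη ρ θ u hρ hθ hu hp hρpos hθpos hmass hmom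
    htemp
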